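/- arXiv:math/0508586 — 8 statements merged into one kernel-verified Lean document; each statement's English description precedes it below -/
import Mathlib

section
/- Let δ > 0, M₂ > 0, and set h(δ) = √(2δ/M₂). Let x ∈ ℝ and suppose f : ℝ → ℝ is twice differentiable on [x−h(δ), x+h(δ)] with |f''(t)| ≤ M₂ for all t in this interval, and suppose f_δ : ℝ → ℝ satisfies |f_δ(x+h(δ)) − f(x+h(δ))| ≤ δ and |f_δ(x−h(δ)) − f(x−h(δ))| ≤ δ. Then |(f_δ(x+h(δ)) − f_δ(x−h(δ)))/(2h(δ)) − f'(x)| ≤ √(2M₂δ). -/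
/-! The symmetric difference quotient of exact data differs from `f'(x)` by at most `M₂ h / 2`:
comparing `g(t) = f(x+t) - f(x-t) - 2t f'(x)` with the barrier `M₂ t²`, whose derivative
`2 M₂ t` dominates `|g'(t)| = |f'(x+t) + f'(x-t) - 2f'(x)|`. The noise adds at most `δ / h`,
and the step `h = √(2δ/M₂)` balances the two terms `δ / h + M₂ h / 2`, both equal to
`√(2M₂δ) / 2`. -/

open Set

section SymmetricDifference

variable {f f' f'' : ℝ → ℝ} {x h M : ℝ}

theorem abs_deriv_add_deriv_sub_le
    (hder2 : ∀ s ∈ Icc (x - h) (x + h), HasDerivAt f' (f'' s) s)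
    (hbound : ∀ s ∈ Icc (x - h) (x + h), |f'' s| ≤ M) {t : ℝ} (ht : t ∈ Icc 0 h) :
    |f' (x + t) + f' (x - t) - 2 * f' x| ≤ 2 * M * t := by
  obtain ⟨ht0, hth⟩ := ht
  have lipschitz : ∀ a ∈ Icc (x - h) (x + h), |f' a - f' x| ≤ M * |a - x| := fun a ha =>
    (convex_Icc _ _).norm_image_sub_le_of_norm_hasDerivWithin_le
      (fun s hs => (hder2 s hs).hasDerivWithinAt) hbound
      ⟨by linarith, by linarith⟩ ha
  have hplus := lipschitz (x + t) ⟨by linarith, by linarith⟩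
  have hminus := lipschitz (x - t) ⟨by linarith, by linarith⟩
  rw [add_sub_cancel_left, abs_of_nonneg ht0] at hplus
  rw [sub_sub_cancel_left, abs_neg, abs_of_nonneg ht0] at hminus
  calc |f' (x + t) + f' (x - t) - 2 * f' x|
      = |(f' (x + t) - f' x) + (f' (x - t) - f' x)| := by congr 1; ring
    _ ≤ |f' (x + t) - f' x| + |f' (x - t) - f' x| := abs_add_le _ _
    _ ≤ 2 * M * t := by linarith

theorem hasDerivAt_symmDiff {t : ℝ} (hplus : HasDerivAt f (f' (x + t)) (x + t))
    (hminus : HasDerivAt f (f' (x - t)) (x - t)) :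
    HasDerivAt (fun s => f (x + s) - f (x - s) - 2 * s * f' x)
      (f' (x + t) + f' (x - t) - 2 * f' x) t := by
  have hplus' := hplus.comp_const_add x t
  have hminus' := hminus.comp_const_sub x t
  have hlin := ((hasDerivAt_id t).const_mul 2).mul_const (f' x)
  exact ((hplus'.sub hminus').sub hlin).congr_deriv (by ring)

theorem abs_symmDiff_sub_deriv_le (hh : 0 ≤ h)
    (hder1 : ∀ s ∈ Icc (x - h) (x + h), HasDerivAt f (f' s) s)
    (hder2 : ∀ s ∈ Icc (x - h) (x + h), HasDerivAt f' (f'' s) s)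
    (hbound : ∀ s ∈ Icc (x - h) (x + h), |f'' s| ≤ M) :
    |f (x + h) - f (x - h) - 2 * h * f' x| ≤ M * h ^ 2 := by
  have hderiv : ∀ t ∈ Icc 0 h, HasDerivAt (fun s => f (x + s) - f (x - s) - 2 * s * f' x)
      (f' (x + t) + f' (x - t) - 2 * f' x) t := fun t ht =>
    hasDerivAt_symmDiff (hder1 _ ⟨by linarith [ht.1], by linarith [ht.2]⟩)
      (hder1 _ ⟨by linarith [ht.2], by linarith [ht.1]⟩)
  have hbarrier : ∀ t, HasDerivAt (fun s => M * s ^ 2) (2 * M * t) t := fun t =>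
    ((hasDerivAt_pow 2 t).const_mul M).congr_deriv (by norm_num; ring)
  refine image_norm_le_of_norm_deriv_right_le_deriv_boundary
    (fun t ht => (hderiv t ht).continuousAt.continuousWithinAt)
    (fun t ht => (hderiv t (Ico_subset_Icc_self ht)).hasDerivWithinAt)
    (by simp) hbarrier
    (fun t ht => abs_deriv_add_deriv_sub_le hder2 hbound (Ico_subset_Icc_self ht))
    (right_mem_Icc.mpr hh)

theorem abs_noisy_symmDiff_quot_sub_deriv_le {fδ : ℝ → ℝ} {δ : ℝ} (hh : 0 < h)
    (hder1 : ∀ s ∈ Icc (x - h) (x + h), HasDerivAt f (f' s) s)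
    (hder2 : ∀ s ∈ Icc (x - h) (x + h), HasDerivAt f' (f'' s) s)
    (hbound : ∀ s ∈ Icc (x - h) (x + h), |f'' s| ≤ M)
    (hnoise1 : |fδ (x + h) - f (x + h)| ≤ δ) (hnoise2 : |fδ (x - h) - f (x - h)| ≤ δ) :
    |(fδ (x + h) - fδ (x - h)) / (2 * h) - f' x| ≤ δ / h + M * h / 2 := by
  have htaylor := abs_symmDiff_sub_deriv_le hh.le hder1 hder2 hbound
  have hnumerator : |fδ (x + h) - fδ (x - h) - 2 * h * f' x| ≤ 2 * δ + M * h ^ 2 :=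
    calc |fδ (x + h) - fδ (x - h) - 2 * h * f' x|
        = |(fδ (x + h) - f (x + h)) - (fδ (x - h) - f (x - h))
            + (f (x + h) - f (x - h) - 2 * h * f' x)| := by congr 1; ring
      _ ≤ |fδ (x + h) - f (x + h)| + |fδ (x - h) - f (x - h)|
            + |f (x + h) - f (x - h) - 2 * h * f' x| :=
        (abs_add_le _ _).trans (add_le_add_left (abs_sub _ _) _)
      _ ≤ 2 * δ + M * h ^ 2 := by linarith
  have hquot : (fδ (x + h) - fδ (x - h)) / (2 * h) - f' x
      = (fδ (x + h) - fδ (x - h) - 2 * h * f' x) / (2 * h) := by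
    field_simp
  have htwo : 0 < 2 * h := by linarith
  rw [hquot, abs_div, abs_of_pos htwo, div_le_iff₀ htwo]
  calc _ ≤ 2 * δ + M * h ^ 2 := hnumerator
    _ = (δ / h + M * h / 2) * (2 * h) := by field_simp

end SymmetricDifference

theorem div_sqrt_add_mul_sqrt_div_two_eq_sqrt {δ M : ℝ} (hδ : 0 < δ) (hM : 0 < M) :
    δ / √(2 * δ / M) + M * √(2 * δ / M) / 2 = √(2 * M * δ) := by
  have hsq : √(2 * δ / M) ^ 2 = 2 * δ / M := Real.sq_sqrt (by positivity)
  have hprod : √(2 * M * δ) * √(2 * δ / M) = 2 * δ := by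
    rw [← Real.sqrt_mul (by positivity), show 2 * M * δ * (2 * δ / M) = (2 * δ) ^ 2 by
      field_simp]
    exact Real.sqrt_sq (by positivity)
  have hpos : 0 < √(2 * δ / M) := Real.sqrt_pos.mpr (by positivity)
  calc δ / √(2 * δ / M) + M * √(2 * δ / M) / 2
      = (2 * δ + M * √(2 * δ / M) ^ 2) / (2 * √(2 * δ / M)) := by field_simp
    _ = 2 * δ / √(2 * δ / M) := by rw [hsq]; field_simp; ring
    _ = √(2 * M * δ) := by rw [div_eq_iff hpos.ne', hprod]

/-- with the optimal step `h(δ) = √(2δ/M₂)`, the symmetric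
difference quotient of noisy data estimates `f'(x)` with error `≤ √(2M₂δ)`. -/
theorem stable_diff_optimal_error
    (δ M₂ h x : ℝ) (hδ : 0 < δ) (hM₂ : 0 < M₂)
    (hh : h = Real.sqrt (2 * δ / M₂))
    (f f' f'' fδ : ℝ → ℝ)
    (hder1 : ∀ t ∈ Set.Icc (x - h) (x + h), HasDerivAt f (f' t) t)
    (hder2 : ∀ t ∈ Set.Icc (x - h) (x + h), HasDerivAt f' (f'' t) t)
    (hbound : ∀ t ∈ Set.Icc (x - h) (x + h), |f'' t| ≤ M₂)
    (hnoise1 : |fδ (x + h) - f (x + h)| ≤ δ)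
    (hnoise2 : |fδ (x - h) - f (x - h)| ≤ δ) :
    |(fδ (x + h) - fδ (x - h)) / (2 * h) - f' x| ≤ Real.sqrt (2 * M₂ * δ) := by
  have hpos : 0 < h := hh ▸ Real.sqrt_pos.mpr (by positivity)
  calc _ ≤ δ / h + M₂ * h / 2 :=
        abs_noisy_symmDiff_quot_sub_deriv_le hpos hder1 hder2 hbound hnoise1 hnoise2
    _ = √(2 * M₂ * δ) := hh ▸ div_sqrt_add_mul_sqrt_div_two_eq_sqrt hδ hM₂
end

section
/- Let M₂ > 0, let x ∈ ℝ, and let f : ℝ → ℝ be twice differentiable on an open interval containing x with |f''(t)| ≤ M₂ on that interval. Suppose that for each δ > 0 a function f_δ : ℝ → ℝ is given with |f_δ(t) − f(t)| ≤ δ for all t ∈ ℝ. Then, with h(δ) = √(2δ/M₂), the quantity (f_δ(x+h(δ)) − f_δ(x−h(δ)))/(2h(δ)) converges to f'(x) as δ → 0⁺. -/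
/-!
Write `h = √(2δ/M₂)`, so that `δ = M₂ h² / 2`. Since `|f''| ≤ M₂`, the mean value theorem gives
`|f (x ± h) - f x ∓ h f' x| ≤ M₂ h²`, and the noise contributes at most `2δ` to the numerator.
Hence the symmetric difference quotient of the noisy data is within `δ / h + M₂ h = 3 M₂ h / 2`
of `f' x`, and this tends to `0` with `δ`.
-/

open Set Filter Topology

section FirstOrderRemainder

variable {s : Set ℝ} {f f' f'' : ℝ → ℝ} {M a b : ℝ}

theorem abs_sub_sub_mul_deriv_le_of_abs_deriv_sub_le (hM : 0 ≤ M)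
    (hf : ∀ t ∈ uIcc a b, HasDerivAt f (f' t) t)
    (hf' : ∀ t ∈ uIcc a b, |f' t - f' a| ≤ M * |t - a|) :
    |f b - f a - (b - a) * f' a| ≤ M * |b - a| ^ 2 := by
  have hderiv : ∀ t ∈ uIcc a b,
      HasDerivWithinAt (fun t => f t - t * f' a) (f' t - f' a) (uIcc a b) t := fun t ht =>
    ((hf t ht).sub ((hasDerivAt_id t).mul_const (f' a))).hasDerivWithinAt.congr_deriv
      (by simp)
  have hbound : ∀ t ∈ uIcc a b, ‖f' t - f' a‖ ≤ M * |b - a| := fun t ht =>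
    (hf' t ht).trans (mul_le_mul_of_nonneg_left (abs_sub_left_of_mem_uIcc ht) hM)
  have := (convex_uIcc a b).norm_image_sub_le_of_norm_hasDerivWithin_le hderiv hbound
    left_mem_uIcc right_mem_uIcc
  simp only [Real.norm_eq_abs] at this
  calc |f b - f a - (b - a) * f' a| = |f b - b * f' a - (f a - a * f' a)| := by ring_nf
    _ ≤ M * |b - a| * |b - a| := this
    _ = M * |b - a| ^ 2 := by ring

theorem abs_sub_sub_mul_deriv_le (hs : Convex ℝ s)
    (hf : ∀ t ∈ s, HasDerivAt f (f' t) t) (hf' : ∀ t ∈ s, HasDerivAt f' (f'' t) t)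
    (hf'' : ∀ t ∈ s, |f'' t| ≤ M) (ha : a ∈ s) (hb : b ∈ s) :
    |f b - f a - (b - a) * f' a| ≤ M * |b - a| ^ 2 := by
  have hsub : uIcc a b ⊆ s := hs.ordConnected.uIcc_subset ha hb
  refine abs_sub_sub_mul_deriv_le_of_abs_deriv_sub_le ((abs_nonneg _).trans (hf'' a ha))
    (fun t ht => hf t (hsub ht)) fun t ht => ?_
  simpa only [Real.norm_eq_abs] using hs.norm_image_sub_le_of_norm_hasDerivWithin_le
    (fun t ht => (hf' t ht).hasDerivWithinAt)
    (fun t ht => (Real.norm_eq_abs _).trans_le (hf'' t ht)) ha (hsub ht)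

theorem abs_symmDiffQuot_sub_deriv_le (hs : Convex ℝ s)
    (hf : ∀ t ∈ s, HasDerivAt f (f' t) t) (hf' : ∀ t ∈ s, HasDerivAt f' (f'' t) t)
    (hf'' : ∀ t ∈ s, |f'' t| ≤ M) {x h δ : ℝ} (hh : 0 < h) (hx : x ∈ s)
    (hxh : x + h ∈ s) (hxh' : x - h ∈ s) {F : ℝ → ℝ} (hF : ∀ t, |F t - f t| ≤ δ) :
    |(F (x + h) - F (x - h)) / (2 * h) - f' x| ≤ δ / h + M * h := by
  have hright := abs_sub_sub_mul_deriv_le hs hf hf' hf'' hx hxh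
  have hleft := abs_sub_sub_mul_deriv_le hs hf hf' hf'' hx hxh'
  simp only [add_sub_cancel_left, sub_sub_cancel_left, abs_neg, abs_of_pos hh] at hright hleft
  have hnum : |F (x + h) - F (x - h) - 2 * h * f' x| ≤ 2 * δ + 2 * (M * h ^ 2) := by
    have hplus := hF (x + h)
    have hminus := hF (x - h)
    rw [abs_le] at hright hleft hplus hminus ⊢
    constructor <;> linarith
  calc |(F (x + h) - F (x - h)) / (2 * h) - f' x|
      = |F (x + h) - F (x - h) - 2 * h * f' x| / (2 * h) := by
        rw [div_sub' (by positivity), abs_div, abs_of_pos (by positivity : (0 : ℝ) < 2 * h),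
          mul_assoc]
    _ ≤ (2 * δ + 2 * (M * h ^ 2)) / (2 * h) := by gcongr
    _ = δ / h + M * h := by field_simp

end FirstOrderRemainder

/-- for `f` twice differentiable on an open interval containing `x`
with `|f''| ≤ M₂` there, and noisy data `F δ` with `‖F δ - f‖_∞ ≤ δ`, the
symmetric difference quotient with step `h(δ) = √(2δ/M₂)` converges to `f'(x)`
as `δ → 0⁺`. -/
theorem stable_diff_convergence
    (M₂ x c d : ℝ) (hM₂ : 0 < M₂) (hx : x ∈ Set.Ioo c d)
    (f f' f'' : ℝ → ℝ)
    (hder1 : ∀ t ∈ Set.Ioo c d, HasDerivAt f (f' t) t)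
    (hder2 : ∀ t ∈ Set.Ioo c d, HasDerivAt f' (f'' t) t)
    (hbound : ∀ t ∈ Set.Ioo c d, |f'' t| ≤ M₂)
    (F : ℝ → ℝ → ℝ)
    (hnoise : ∀ δ : ℝ, 0 < δ → ∀ t : ℝ, |F δ t - f t| ≤ δ) :
    Filter.Tendsto
      (fun δ : ℝ =>
        (F δ (x + Real.sqrt (2 * δ / M₂)) - F δ (x - Real.sqrt (2 * δ / M₂))) /
          (2 * Real.sqrt (2 * δ / M₂)))
      (nhdsWithin 0 (Set.Ioi 0)) (nhds (f' x)) := by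
  set h : ℝ → ℝ := fun δ => Real.sqrt (2 * δ / M₂)
  have hstep : Tendsto h (𝓝[>] 0) (𝓝 0) := by
    have : Tendsto h (𝓝 0) (𝓝 (h 0)) := (by fun_prop : Continuous h).tendsto 0
    simpa [h] using this.mono_left nhdsWithin_le_nhds
  have hright : ∀ᶠ δ in 𝓝[>] 0, x + h δ ∈ Ioo c d := by
    have := (tendsto_const_nhds (x := x)).add hstep
    rw [add_zero] at this
    exact this.eventually (Ioo_mem_nhds hx.1 hx.2)
  have hleft : ∀ᶠ δ in 𝓝[>] 0, x - h δ ∈ Ioo c d := by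
    have := (tendsto_const_nhds (x := x)).sub hstep
    rw [sub_zero] at this
    exact this.eventually (Ioo_mem_nhds hx.1 hx.2)
  rw [tendsto_iff_norm_sub_tendsto_zero]
  refine squeeze_zero' (Eventually.of_forall fun _ => norm_nonneg _) ?_
    (by simpa using hstep.const_mul (3 / 2 * M₂))
  filter_upwards [self_mem_nhdsWithin, hright, hleft] with δ (hδ : 0 < δ) hδr hδl
  have hh : 0 < h δ := Real.sqrt_pos.2 (by positivity)
  have hsq : M₂ * h δ ^ 2 = 2 * δ := by
    rw [Real.sq_sqrt (by positivity)]
    field_simp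
  calc _ ≤ δ / h δ + M₂ * h δ := abs_symmDiffQuot_sub_deriv_le (convex_Ioo c d) hder1 hder2
        hbound hh hx hδr hδl (hnoise δ hδ)
    _ = 3 / 2 * M₂ * h δ := by
      field_simp
      linarith
end

section
/- Let δ > 0 and M₂ > 0, and set ε = √(2M₂δ) and L = 2√(2δ/M₂). Define f₁(t) = ε·t − M₂·t²/2 and f₂(t) = −f₁(t). Then f₁ and f₂ are twice differentiable with |f₁''(t)| = |f₂''(t)| = M₂ for all t, |f₁(t)| ≤ δ and |f₂(t)| ≤ δ for all t ∈ [0, L] (so both f₁ and f₂ lie within δ of the identically zero data function on [0, L]), f₁'(0) − f₂'(0) = 2√(2M₂δ), and consequently for every real number r, max(|r − f₁'(0)|, |r − f₂'(0)|) ≥ √(2M₂δ). -/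
/-!
With `s = √(2δ/M₂)` the parabola `f₁ t = M₂ s t - M₂ t²/2 = M₂ t (2s - t)/2` rises from `0` to its
maximum `M₂ s²/2 = δ` at `t = s` and returns to `0` at `t = L = 2s`, so `f₁` and `-f₁` both stay
within `δ` of the zero data on `[0, L]`, while their slopes at `0` are `±M₂ s = ±√(2M₂δ)`.
A single estimate `r` is at distance at least half the gap `2√(2M₂δ)` from one of the two.
-/

open Set

noncomputable section

def parabola (a c t : ℝ) : ℝ := a * t - c * t ^ 2 / 2

namespace parabola

theorem hasDerivAt (a c t : ℝ) : HasDerivAt (parabola a c) (a - c * t) t := by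
  refine (((hasDerivAt_id' t).const_mul a).sub
    (((hasDerivAt_pow 2 t).const_mul c).div_const 2)).congr_deriv ?_
  simp only [mul_one, Nat.cast_ofNat, Nat.add_one_sub_one, pow_one]; ring

theorem deriv_eq (a c : ℝ) : deriv (parabola a c) = fun t => a - c * t :=
  funext fun t => (hasDerivAt a c t).deriv

theorem hasDerivAt_deriv (a c t : ℝ) : HasDerivAt (deriv (parabola a c)) (-c) t := by
  rw [deriv_eq]
  simpa using ((hasDerivAt_id t).const_mul c).const_sub a

theorem neg_apply (a c t : ℝ) : -parabola a c t = parabola (-a) (-c) t := by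
  simp only [parabola]; ring

theorem mem_Icc {c s t : ℝ} (hc : 0 ≤ c) (ht : t ∈ Icc 0 (2 * s)) :
    parabola (c * s) c t ∈ Icc 0 (c * s ^ 2 / 2) := by
  have hbelow : parabola (c * s) c t = c * s ^ 2 / 2 - c * (s - t) ^ 2 / 2 := by
    simp only [parabola]; ring
  have habove : parabola (c * s) c t = c * t * (2 * s - t) / 2 := by
    simp only [parabola]; ring
  constructor
  · rw [habove]
    have := mul_nonneg (mul_nonneg hc ht.1) (sub_nonneg.2 ht.2)
    positivity
  · rw [hbelow]
    have := mul_nonneg hc (sq_nonneg (s - t))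
    linarith

end parabola

theorem Real.sqrt_two_mul_mul_eq {c δ : ℝ} (hc : 0 < c) :
    √(2 * c * δ) = c * √(2 * δ / c) := by
  rw [← Real.sqrt_sq hc.le, ← Real.sqrt_mul (sq_nonneg c), Real.sqrt_sq hc.le]
  congr 1
  field_simp

theorem half_abs_sub_le_max_abs_sub (r x y : ℝ) : |x - y| / 2 ≤ max |r - x| |r - y| := by
  have := abs_sub_le x r y
  rw [abs_sub_comm x r] at this
  linarith [le_max_left |r - x| |r - y|, le_max_right |r - x| |r - y|]

end

/-- optimality of the bound `ε(δ) = √(2M₂δ)`.  With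
`ε = √(2M₂δ)`, `L = 2√(2δ/M₂)`, `f₁(t) = ε t - M₂ t²/2` and `f₂ = -f₁`:
both functions are twice differentiable with `|f''| = M₂` everywhere, both lie
within `δ` of the zero data function on `[0, L]`, their derivatives at `0`
differ by `2√(2M₂δ)`, and hence every real `r` is at distance at least
`√(2M₂δ)` from `f₁'(0)` or from `f₂'(0)`. -/
theorem stable_diff_bound_optimal
    (δ M₂ : ℝ) (hδ : 0 < δ) (hM₂ : 0 < M₂)
    (ε L : ℝ) (hε : ε = Real.sqrt (2 * M₂ * δ))
    (hL : L = 2 * Real.sqrt (2 * δ / M₂))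
    (f₁ f₂ : ℝ → ℝ)
    (hf₁ : ∀ t, f₁ t = ε * t - M₂ * t ^ 2 / 2)
    (hf₂ : ∀ t, f₂ t = -f₁ t) :
    (∀ t : ℝ, DifferentiableAt ℝ f₁ t ∧ DifferentiableAt ℝ (deriv f₁) t ∧
      DifferentiableAt ℝ f₂ t ∧ DifferentiableAt ℝ (deriv f₂) t ∧
      |deriv (deriv f₁) t| = M₂ ∧ |deriv (deriv f₂) t| = M₂) ∧
    (∀ t ∈ Set.Icc (0 : ℝ) L, |f₁ t| ≤ δ ∧ |f₂ t| ≤ δ) ∧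
    deriv f₁ 0 - deriv f₂ 0 = 2 * Real.sqrt (2 * M₂ * δ) ∧
    (∀ r : ℝ, Real.sqrt (2 * M₂ * δ) ≤
      max |r - deriv f₁ 0| |r - deriv f₂ 0|) := by
  obtain rfl : f₁ = parabola ε M₂ := funext hf₁
  obtain rfl : f₂ = parabola (-ε) (-M₂) := funext fun t => (hf₂ t).trans (parabola.neg_apply ..)
  set s := √(2 * δ / M₂)
  have hεs : ε = M₂ * s := hε.trans (Real.sqrt_two_mul_mul_eq hM₂)
  have hpeak : M₂ * s ^ 2 / 2 = δ := by
    rw [Real.sq_sqrt (by positivity)]; field_simp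
  have hgap : deriv (parabola ε M₂) 0 - deriv (parabola (-ε) (-M₂)) 0 = 2 * √(2 * M₂ * δ) := by
    simp only [parabola.deriv_eq, hε]; ring
  refine ⟨fun t => ⟨(parabola.hasDerivAt ..).differentiableAt,
      (parabola.hasDerivAt_deriv ..).differentiableAt, (parabola.hasDerivAt ..).differentiableAt,
      (parabola.hasDerivAt_deriv ..).differentiableAt, ?_, ?_⟩, fun t ht => ?_, hgap, fun r => ?_⟩
  · rw [(parabola.hasDerivAt_deriv ..).deriv, abs_neg, abs_of_pos hM₂]
  · rw [(parabola.hasDerivAt_deriv ..).deriv, neg_neg, abs_of_pos hM₂]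
  · have hbound := parabola.mem_Icc hM₂.le (hL ▸ ht : t ∈ Icc 0 (2 * s))
    rw [← hεs, hpeak] at hbound
    rw [← parabola.neg_apply, abs_neg, abs_of_nonneg hbound.1]
    exact ⟨hbound.2, hbound.2⟩
  · have h := half_abs_sub_le_max_abs_sub r (deriv (parabola ε M₂) 0)
      (deriv (parabola (-ε) (-M₂)) 0)
    rwa [hgap, abs_of_nonneg (by positivity), mul_div_cancel_left₀ _ two_ne_zero] at h
end

section
/- Let a < x₀ < b, let M₁ ≥ 0, and let f : ℝ → ℝ be differentiable on (a, x₀) and on (x₀, b) with |f'(t)| ≤ M₁ there, continuous on [a, x₀) and on (x₀, b], and suppose the one-sided limits f(x₀+) = lim_{t→x₀⁺} f(t) and f(x₀−) = lim_{t→x₀⁻} f(t) exist. Let p = f(x₀+) − f(x₀−). Then |f(b) − f(a)| ≥ |p| − M₁·(b − a). -/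
open Set Filter Topology

lemma aux_lip_limit (c d M : ℝ) (hcd : c < d) (hM : 0 ≤ M) (f f' : ℝ → ℝ)
    (Lc Ld : ℝ)
    (hder : ∀ t ∈ Set.Ioo c d, HasDerivAt f (f' t) t)
    (hbound : ∀ t ∈ Set.Ioo c d, |f' t| ≤ M)
    (hLc : Filter.Tendsto f (nhdsWithin c (Set.Ioo c d)) (nhds Lc))
    (hLd : Filter.Tendsto f (nhdsWithin d (Set.Ioo c d)) (nhds Ld)) :
    |Ld - Lc| ≤ M * (d - c) := by
  have key : ∀ s ∈ Set.Ioo c d, ∀ t ∈ Set.Ioo c d, |f t - f s| ≤ M * (d - c) := by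
    intro s hs t ht
    have h := (convex_Ioo c d).norm_image_sub_le_of_norm_hasDerivWithin_le
      (fun x hx => (hder x hx).hasDerivWithinAt)
      (fun x hx => by simpa [Real.norm_eq_abs] using hbound x hx) hs ht
    have h2 : |f t - f s| ≤ M * |t - s| := by simpa [Real.norm_eq_abs] using h
    refine h2.trans (mul_le_mul_of_nonneg_left ?_ hM)
    rw [abs_sub_le_iff]
    constructor <;> nlinarith [hs.1, hs.2, ht.1, ht.2]
  have hcne : (nhdsWithin c (Set.Ioo c d)).NeBot := by
    rw [nhdsWithin_Ioo_eq_nhdsGT hcd]; infer_instance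
  have hdne : (nhdsWithin d (Set.Ioo c d)).NeBot := by
    rw [nhdsWithin_Ioo_eq_nhdsLT hcd]; infer_instance
  have step1 : ∀ s ∈ Set.Ioo c d, |Ld - f s| ≤ M * (d - c) := by
    intro s hs
    have htend : Filter.Tendsto (fun t => |f t - f s|)
        (nhdsWithin d (Set.Ioo c d)) (nhds |Ld - f s|) :=
      ((hLd.sub tendsto_const_nhds).abs)
    refine le_of_tendsto htend ?_
    filter_upwards [self_mem_nhdsWithin] with t ht using key s hs t ht
  have htend2 : Filter.Tendsto (fun s => |Ld - f s|)
      (nhdsWithin c (Set.Ioo c d)) (nhds |Ld - Lc|) :=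
    ((tendsto_const_nhds.sub hLc).abs)
  refine le_of_tendsto htend2 ?_
  filter_upwards [self_mem_nhdsWithin] with s hs using step1 s hs

/-- if `f` is piecewise smooth on `[a,b]` with a single
discontinuity point `x₀ ∈ (a,b)`, `|f'| ≤ M₁` away from `x₀`, and the jump of
`f` across `x₀` is `p = f(x₀+) - f(x₀-)`, then `|f(b) - f(a)| ≥ |p| - M₁(b-a)`. -/
theorem jump_lower_bound
    (a b x₀ M₁ : ℝ) (hax : a < x₀) (hxb : x₀ < b) (hM₁ : 0 ≤ M₁)
    (f f' : ℝ → ℝ) (fplus fminus : ℝ)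
    (hder : ∀ t ∈ Set.Ioo a x₀ ∪ Set.Ioo x₀ b, HasDerivAt f (f' t) t)
    (hbound : ∀ t ∈ Set.Ioo a x₀ ∪ Set.Ioo x₀ b, |f' t| ≤ M₁)
    (hcont1 : ContinuousOn f (Set.Ico a x₀))
    (hcont2 : ContinuousOn f (Set.Ioc x₀ b))
    (hplus : Filter.Tendsto f (nhdsWithin x₀ (Set.Ioi x₀)) (nhds fplus))
    (hminus : Filter.Tendsto f (nhdsWithin x₀ (Set.Iio x₀)) (nhds fminus)) :
    |fplus - fminus| - M₁ * (b - a) ≤ |f b - f a| := by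
  have hleft : |fminus - f a| ≤ M₁ * (x₀ - a) := by
    apply aux_lip_limit a x₀ M₁ hax hM₁ f f'
      (f a) fminus (fun t ht => hder t (Or.inl ht)) (fun t ht => hbound t (Or.inl ht))
    · exact (hcont1 a ⟨le_refl a, hax⟩).mono Set.Ioo_subset_Ico_self
    · exact hminus.mono_left (nhdsWithin_mono _ Set.Ioo_subset_Iio_self)
  have hright : |f b - fplus| ≤ M₁ * (b - x₀) := by
    apply aux_lip_limit x₀ b M₁ hxb hM₁ f f'
      fplus (f b) (fun t ht => hder t (Or.inr ht)) (fun t ht => hbound t (Or.inr ht))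
    · exact hplus.mono_left (nhdsWithin_mono _ Set.Ioo_subset_Ioi_self)
    · exact (hcont2 b ⟨hxb, le_refl b⟩).mono Set.Ioo_subset_Ioc_self
  have htri : |fplus - fminus| ≤ |f b - f a| + |f b - fplus| + |fminus - f a| := by
    have : fplus - fminus = (f b - f a) - (f b - fplus) - (fminus - f a) := by ring
    rw [this]
    calc |(f b - f a) - (f b - fplus) - (fminus - f a)|
        ≤ |(f b - f a) - (f b - fplus)| + |fminus - f a| := abs_sub _ _
      _ ≤ |f b - f a| + |f b - fplus| + |fminus - f a| := by
          gcongr; exact abs_sub _ _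
  nlinarith [hleft, hright, htri]
end

section
/- Let h > 0, δ > 0, M₁ ≥ 0, let a < x₀ < b with b − a = 2h, and let f : ℝ → ℝ be differentiable on (a, x₀) and on (x₀, b) with |f'(t)| ≤ M₁ there, continuous on [a, x₀) and on (x₀, b], with one-sided limits f(x₀+) and f(x₀−) existing; let p = f(x₀+) − f(x₀−). Suppose f_δ : ℝ → ℝ satisfies |f_δ(a) − f(a)| ≤ δ and |f_δ(b) − f(b)| ≤ δ. Then |(f_δ(b) − f_δ(a))/(2h)| ≥ |p|/(2h) − M₁ − δ/h. -/
open Set Filter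

lemma aux_lip (M c d : ℝ) (hM : 0 ≤ M) (f f' : ℝ → ℝ)
    (hder : ∀ t ∈ Set.Ioo c d, HasDerivAt f (f' t) t)
    (hb : ∀ t ∈ Set.Ioo c d, |f' t| ≤ M)
    {s t : ℝ} (hs : s ∈ Set.Ioo c d) (ht : t ∈ Set.Ioo c d) :
    |f s - f t| ≤ M * |s - t| := by
  have := (convex_Ioo c d).norm_image_sub_le_of_norm_hasDerivWithin_le
    (fun x hx => (hder x hx).hasDerivWithinAt) (fun x hx => by
      rw [Real.norm_eq_abs]; exact hb x hx) ht hs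
  simpa [Real.norm_eq_abs] using this

/-- detection of a discontinuity from noisy data.  If the interval
`[a,b]` of length `2h` contains a discontinuity point `x₀` of `f` with jump
`p = f(x₀+) - f(x₀-)`, `|f'| ≤ M₁` away from `x₀`, and `f_δ` is noisy data with
noise level `δ`, then `|(f_δ(b) - f_δ(a))/(2h)| ≥ |p|/(2h) - M₁ - δ/h`. -/
theorem discontinuity_detection_lower_bound
    (h δ M₁ a b x₀ : ℝ) (hh : 0 < h) (hδ : 0 < δ) (hM₁ : 0 ≤ M₁)
    (hax : a < x₀) (hxb : x₀ < b) (hab : b - a = 2 * h)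
    (f f' fδ : ℝ → ℝ) (fplus fminus : ℝ)
    (hder : ∀ t ∈ Set.Ioo a x₀ ∪ Set.Ioo x₀ b, HasDerivAt f (f' t) t)
    (hbound : ∀ t ∈ Set.Ioo a x₀ ∪ Set.Ioo x₀ b, |f' t| ≤ M₁)
    (hcont1 : ContinuousOn f (Set.Ico a x₀))
    (hcont2 : ContinuousOn f (Set.Ioc x₀ b))
    (hplus : Filter.Tendsto f (nhdsWithin x₀ (Set.Ioi x₀)) (nhds fplus))
    (hminus : Filter.Tendsto f (nhdsWithin x₀ (Set.Iio x₀)) (nhds fminus))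
    (hnoise1 : |fδ a - f a| ≤ δ)
    (hnoise2 : |fδ b - f b| ≤ δ) :
    |fplus - fminus| / (2 * h) - M₁ - δ / h ≤ |(fδ b - fδ a) / (2 * h)| := by
  have hderR : ∀ t ∈ Set.Ioo x₀ b, HasDerivAt f (f' t) t :=
    fun t ht => hder t (Or.inr ht)
  have hboundR : ∀ t ∈ Set.Ioo x₀ b, |f' t| ≤ M₁ := fun t ht => hbound t (Or.inr ht)
  have hderL : ∀ t ∈ Set.Ioo a x₀, HasDerivAt f (f' t) t :=
    fun t ht => hder t (Or.inl ht)
  have hboundL : ∀ t ∈ Set.Ioo a x₀, |f' t| ≤ M₁ := fun t ht => hbound t (Or.inl ht)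
  -- Step 1: |f b - f t| ≤ M₁ * (b - x₀) for t ∈ Ioo x₀ b
  have step1 : ∀ t ∈ Set.Ioo x₀ b, |f b - f t| ≤ M₁ * (b - x₀) := by
    intro t ht
    have htb : t < b := ht.2
    have hne : (nhdsWithin b (Set.Ioo t b)).NeBot := by
      apply mem_closure_iff_nhdsWithin_neBot.mp
      rw [closure_Ioo (ne_of_lt htb)]
      exact ⟨le_of_lt htb, le_refl b⟩
    have htend : Tendsto (fun s => |f s - f t|) (nhdsWithin b (Set.Ioo t b))
        (nhds (|f b - f t|)) := by
      have hfb : Tendsto f (nhdsWithin b (Set.Ioo t b)) (nhds (f b)) := by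
        have := hcont2 b ⟨hxb, le_refl b⟩
        exact this.mono_left (nhdsWithin_mono b (fun x hx => ⟨lt_trans ht.1 hx.1, le_of_lt hx.2⟩))
      exact (hfb.sub tendsto_const_nhds).abs
    refine le_of_tendsto htend ?_
    filter_upwards [self_mem_nhdsWithin] with s hs
    calc |f s - f t| ≤ M₁ * |s - t| :=
          aux_lip M₁ x₀ b hM₁ f f' hderR hboundR ⟨lt_trans ht.1 hs.1, hs.2⟩ ht
      _ ≤ M₁ * (b - x₀) := by
          apply mul_le_mul_of_nonneg_left _ hM₁
          rw [abs_of_pos (by linarith [hs.1] : (0:ℝ) < s - t)]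
          linarith [hs.2, ht.1]
  -- Step 2: |f b - fplus| ≤ M₁ * (b - x₀)
  have Rbound : |f b - fplus| ≤ M₁ * (b - x₀) := by
    have hne : (nhdsWithin x₀ (Set.Ioo x₀ b)).NeBot := by
      apply mem_closure_iff_nhdsWithin_neBot.mp
      rw [closure_Ioo (ne_of_lt hxb)]
      exact ⟨le_refl x₀, le_of_lt hxb⟩
    have hplus' : Tendsto f (nhdsWithin x₀ (Set.Ioo x₀ b)) (nhds fplus) :=
      hplus.mono_left (nhdsWithin_mono x₀ (fun x hx => hx.1))
    have htend : Tendsto (fun t => |f b - f t|) (nhdsWithin x₀ (Set.Ioo x₀ b))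
        (nhds (|f b - fplus|)) := (tendsto_const_nhds.sub hplus').abs
    refine le_of_tendsto htend ?_
    filter_upwards [self_mem_nhdsWithin] with t ht
    exact step1 t ht
  -- Step 1': |f t - f a| ≤ M₁ * (x₀ - a) for t ∈ Ioo a x₀
  have step1' : ∀ t ∈ Set.Ioo a x₀, |f t - f a| ≤ M₁ * (x₀ - a) := by
    intro t ht
    have hat : a < t := ht.1
    have hne : (nhdsWithin a (Set.Ioo a t)).NeBot := by
      apply mem_closure_iff_nhdsWithin_neBot.mp
      rw [closure_Ioo (ne_of_lt hat)]
      exact ⟨le_refl a, le_of_lt hat⟩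
    have htend : Tendsto (fun s => |f t - f s|) (nhdsWithin a (Set.Ioo a t))
        (nhds (|f t - f a|)) := by
      have hfa : Tendsto f (nhdsWithin a (Set.Ioo a t)) (nhds (f a)) := by
        have := hcont1 a ⟨le_refl a, hax⟩
        exact this.mono_left (nhdsWithin_mono a (fun x hx => ⟨le_of_lt hx.1, lt_trans hx.2 ht.2⟩))
      exact (tendsto_const_nhds.sub hfa).abs
    refine le_of_tendsto htend ?_
    filter_upwards [self_mem_nhdsWithin] with s hs
    calc |f t - f s| ≤ M₁ * |t - s| :=
          aux_lip M₁ a x₀ hM₁ f f' hderL hboundL ht ⟨hs.1, lt_trans hs.2 ht.2⟩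
      _ ≤ M₁ * (x₀ - a) := by
          apply mul_le_mul_of_nonneg_left _ hM₁
          rw [abs_of_pos (by linarith [hs.2] : (0:ℝ) < t - s)]
          linarith [hs.1, ht.2]
  -- Step 2': |fminus - f a| ≤ M₁ * (x₀ - a)
  have Lbound : |fminus - f a| ≤ M₁ * (x₀ - a) := by
    have hne : (nhdsWithin x₀ (Set.Ioo a x₀)).NeBot := by
      apply mem_closure_iff_nhdsWithin_neBot.mp
      rw [closure_Ioo (ne_of_lt hax)]
      exact ⟨le_of_lt hax, le_refl x₀⟩
    have hminus' : Tendsto f (nhdsWithin x₀ (Set.Ioo a x₀)) (nhds fminus) :=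
      hminus.mono_left (nhdsWithin_mono x₀ (fun x hx => hx.2))
    have htend : Tendsto (fun t => |f t - f a|) (nhdsWithin x₀ (Set.Ioo a x₀))
        (nhds (|fminus - f a|)) := (hminus'.sub tendsto_const_nhds).abs
    refine le_of_tendsto htend ?_
    filter_upwards [self_mem_nhdsWithin] with t ht
    exact step1' t ht
  -- combine
  have c1 : |fplus - fminus| ≤ |fplus - f b| + |f b - fminus| := abs_sub_le _ _ _
  have c2 : |f b - fminus| ≤ |f b - fδ b| + |fδ b - fminus| := abs_sub_le _ _ _
  have c3 : |fδ b - fminus| ≤ |fδ b - fδ a| + |fδ a - fminus| := abs_sub_le _ _ _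
  have c4 : |fδ a - fminus| ≤ |fδ a - f a| + |f a - fminus| := abs_sub_le _ _ _
  rw [abs_sub_comm fplus (f b)] at c1
  rw [abs_sub_comm (f b) (fδ b)] at c2
  rw [abs_sub_comm (f a) fminus] at c4
  have e3 : M₁ * (b - x₀) + M₁ * (x₀ - a) = 2 * h * M₁ := by
    rw [← mul_add, show b - x₀ + (x₀ - a) = b - a by ring, hab]; ring
  have key : |fplus - fminus| ≤ |fδ b - fδ a| + 2 * h * M₁ + 2 * δ := by
    linarith
  have h2 : (0:ℝ) < 2 * h := by linarith
  rw [abs_div, abs_of_pos h2]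
  have e2 : (|fδ b - fδ a| + 2 * h * M₁ + 2 * δ) / (2 * h)
      = |fδ b - fδ a| / (2 * h) + M₁ + δ / h := by
    field_simp
  have hmono : |fplus - fminus| / (2 * h) ≤
      (|fδ b - fδ a| + 2 * h * M₁ + 2 * δ) / (2 * h) := by gcongr
  rw [e2] at hmono
  linarith
end

section
/- Let h > 0, δ > 0, M₁ ≥ 0, let a < x₀ < b with b − a = 2h, and let f : ℝ → ℝ be differentiable on (a, x₀) and on (x₀, b) with |f'(t)| ≤ M₁ there, continuous on [a, x₀) and on (x₀, b], with one-sided limits f(x₀+) and f(x₀−) existing; let p = f(x₀+) − f(x₀−). Suppose f_δ : ℝ → ℝ satisfies |f_δ(a) − f(a)| ≤ δ and |f_δ(b) − f(b)| ≤ δ. Then |p − (f_δ(b) − f_δ(a))| ≤ 2δ + 2M₁h. -/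
/-- estimation of the jump from noisy data.  If the interval
`[a,b]` of length `2h` contains a discontinuity point `x₀` of `f` with jump
`p = f(x₀+) - f(x₀-)`, `|f'| ≤ M₁` away from `x₀`, and `f_δ` is noisy data with
noise level `δ`, then `|p - (f_δ(b) - f_δ(a))| ≤ 2δ + 2M₁h`. -/
theorem jump_estimate_error
    (h δ M₁ a b x₀ : ℝ) (hh : 0 < h) (hδ : 0 < δ) (hM₁ : 0 ≤ M₁)
    (hax : a < x₀) (hxb : x₀ < b) (hab : b - a = 2 * h)
    (f f' fδ : ℝ → ℝ) (fplus fminus : ℝ)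
    (hder : ∀ t ∈ Set.Ioo a x₀ ∪ Set.Ioo x₀ b, HasDerivAt f (f' t) t)
    (hbound : ∀ t ∈ Set.Ioo a x₀ ∪ Set.Ioo x₀ b, |f' t| ≤ M₁)
    (hcont1 : ContinuousOn f (Set.Ico a x₀))
    (hcont2 : ContinuousOn f (Set.Ioc x₀ b))
    (hplus : Filter.Tendsto f (nhdsWithin x₀ (Set.Ioi x₀)) (nhds fplus))
    (hminus : Filter.Tendsto f (nhdsWithin x₀ (Set.Iio x₀)) (nhds fminus))
    (hnoise1 : |fδ a - f a| ≤ δ)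
    (hnoise2 : |fδ b - f b| ≤ δ) :
    |(fplus - fminus) - (fδ b - fδ a)| ≤ 2 * δ + 2 * M₁ * h := by
  have key1 : |fminus - f a| ≤ M₁ * (x₀ - a) := by
    have ev : ∀ᶠ t in nhdsWithin x₀ (Set.Iio x₀), |f t - f a| ≤ M₁ * (x₀ - a) := by
      filter_upwards [Ioo_mem_nhdsLT hax] with t ht
      obtain ⟨c, hc, hc'⟩ := exists_hasDerivAt_eq_slope f f' ht.1
        (hcont1.mono (Set.Icc_subset_Ico_right ht.2))
        (fun x hx => hder x (Or.inl ⟨hx.1, hx.2.trans ht.2⟩))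
      have hfc : |f' c| ≤ M₁ := hbound c (Or.inl ⟨hc.1, hc.2.trans ht.2⟩)
      have hta : t - a ≠ 0 := by linarith [ht.1]
      have : f t - f a = f' c * (t - a) := by
        rw [eq_div_iff hta] at hc'; linarith [hc']
      rw [this, abs_mul, abs_of_pos (by linarith [ht.1] : (0:ℝ) < t - a)]
      have h1 : t - a ≤ x₀ - a := by linarith [ht.2]
      nlinarith [abs_nonneg (f' c), ht.1]
    have htend : Filter.Tendsto (fun t => |f t - f a|)
        (nhdsWithin x₀ (Set.Iio x₀)) (nhds |fminus - f a|) :=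
      (hminus.sub_const (f a)).abs
    exact le_of_tendsto htend ev
  have key2 : |f b - fplus| ≤ M₁ * (b - x₀) := by
    have ev : ∀ᶠ t in nhdsWithin x₀ (Set.Ioi x₀), |f b - f t| ≤ M₁ * (b - x₀) := by
      filter_upwards [Ioo_mem_nhdsGT hxb] with t ht
      obtain ⟨c, hc, hc'⟩ := exists_hasDerivAt_eq_slope f f' ht.2
        (hcont2.mono (fun x hx => ⟨lt_of_lt_of_le ht.1 hx.1, hx.2⟩))
        (fun x hx => hder x (Or.inr ⟨ht.1.trans hx.1, hx.2⟩))
      have hfc : |f' c| ≤ M₁ := hbound c (Or.inr ⟨ht.1.trans hc.1, hc.2⟩)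
      have htb : b - t ≠ 0 := by linarith [ht.2]
      have : f b - f t = f' c * (b - t) := by
        rw [eq_div_iff htb] at hc'; linarith [hc']
      rw [this, abs_mul, abs_of_pos (by linarith [ht.2] : (0:ℝ) < b - t)]
      nlinarith [abs_nonneg (f' c), ht.1, ht.2]
    have htend : Filter.Tendsto (fun t => |f b - f t|)
        (nhdsWithin x₀ (Set.Ioi x₀)) (nhds |f b - fplus|) :=
      ((tendsto_const_nhds.sub hplus).abs)
    exact le_of_tendsto htend ev
  have e1 : |fδ a - f a| + |fδ b - f b| ≤ 2 * δ := by linarith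
  have habs : |(fplus - fminus) - (fδ b - fδ a)| ≤
      |f b - fplus| + |fδ b - f b| + |fδ a - f a| + |fminus - f a| := by
    have h1 : (fplus - fminus) - (fδ b - fδ a) =
        (-(f b - fplus)) + (-(fδ b - f b)) + (fδ a - f a) + (-(fminus - f a)) := by ring
    rw [h1]
    calc _ ≤ |(-(f b - fplus)) + (-(fδ b - f b)) + (fδ a - f a)| + |(-(fminus - f a))| :=
          abs_add_le _ _
      _ ≤ |(-(f b - fplus)) + (-(fδ b - f b))| + |fδ a - f a| + |(-(fminus - f a))| := by
          gcongr; exact abs_add_le _ _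
      _ ≤ |(-(f b - fplus))| + |(-(fδ b - f b))| + |fδ a - f a| + |(-(fminus - f a))| := by
          gcongr; exact abs_add_le _ _
      _ = _ := by rw [abs_neg, abs_neg, abs_neg]
  have : M₁ * (x₀ - a) + M₁ * (b - x₀) = 2 * M₁ * h := by nlinarith
  linarith
end

section
/- Let 1 < a ≤ 2, M_a > 0, δ > 0, x ∈ ℝ, and set h = (2δ/(M_a(a−1)))^{1/a}. Suppose f : ℝ → ℝ is differentiable on [x−h, x+h] and |f'(u) − f'(v)| ≤ M_a·|u − v|^{a−1} for all u, v ∈ [x−h, x+h], and suppose f_δ : ℝ → ℝ satisfies |f_δ(x+h) − f(x+h)| ≤ δ and |f_δ(x−h) − f(x−h)| ≤ δ. Then |(f_δ(x+h) − f_δ(x−h))/(2h) − f'(x)| ≤ a·M_a^{1/a}·(2/(a−1))^{(a−1)/a}·δ^{(a−1)/a}. -/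
/-!
The error of the noisy central difference splits into a noise part, at most `δ / h`, and a
truncation part: the mean value theorem applied to `t ↦ f t - f' x * t`, whose derivative is
at most `M h^(a-1)` on `[x - h, x + h]` by the Hölder condition, bounds it by `M h^(a-1)`.
The step size is chosen so that `h^a = 2δ / (M (a-1))`, i.e. `δ / h = (a-1)/2 · M h^(a-1)`; hence
the total error is `(a+1)/2 · M h^(a-1) ≤ a M h^(a-1)`, and `M h^(a-1)` is exactly
`M^(1/a) (2/(a-1))^((a-1)/a) δ^((a-1)/a)`.
-/

open Set

lemma abs_sub_sub_mul_le_of_abs_deriv_sub_le {f f' : ℝ → ℝ} {a b c K : ℝ} (hab : a ≤ b)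
    (hf : ∀ t ∈ Icc a b, HasDerivAt f (f' t) t) (hK : ∀ t ∈ Icc a b, |f' t - c| ≤ K) :
    |f b - f a - c * (b - a)| ≤ K * (b - a) := by
  have hg : ∀ t ∈ Icc a b,
      HasDerivWithinAt (fun y ↦ f y - y * c) (f' t - c) (Icc a b) t := fun t ht ↦
    ((hf t ht).sub (hasDerivAt_mul_const c)).hasDerivWithinAt
  have := norm_image_sub_le_of_norm_deriv_le_segment' hg (fun t ht ↦ hK t (Ico_subset_Icc_self ht))
    b (right_mem_Icc.2 hab)
  rw [Real.norm_eq_abs] at this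
  convert this using 2
  ring

noncomputable def centralDiff (f : ℝ → ℝ) (x h : ℝ) : ℝ := (f (x + h) - f (x - h)) / (2 * h)

lemma abs_centralDiff_sub_le_of_holderAt {f f' : ℝ → ℝ} {x h M α : ℝ} (hh : 0 < h)
    (hM : 0 ≤ M) (hα : 0 ≤ α) (hf : ∀ t ∈ Icc (x - h) (x + h), HasDerivAt f (f' t) t)
    (hHolder : ∀ t ∈ Icc (x - h) (x + h), |f' t - f' x| ≤ M * |t - x| ^ α) :
    |centralDiff f x h - f' x| ≤ M * h ^ α := by
  have hbound : ∀ t ∈ Icc (x - h) (x + h), |f' t - f' x| ≤ M * h ^ α := fun t ht ↦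
    (hHolder t ht).trans <| by
      gcongr
      exact abs_sub_le_iff.2 ⟨by linarith [ht.2], by linarith [ht.1]⟩
  have := abs_sub_sub_mul_le_of_abs_deriv_sub_le (by linarith) hf hbound
  have h2h : 0 < 2 * h := by positivity
  rw [centralDiff, div_sub' h2h.ne', abs_div, abs_of_pos h2h, div_le_iff₀ h2h]
  rw [show x + h - (x - h) = 2 * h by ring] at this
  rwa [mul_comm (2 * h)]

lemma abs_centralDiff_sub_centralDiff_le {f g : ℝ → ℝ} {x h δ : ℝ} (hh : 0 < h)
    (hplus : |g (x + h) - f (x + h)| ≤ δ) (hminus : |g (x - h) - f (x - h)| ≤ δ) :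
    |centralDiff g x h - centralDiff f x h| ≤ δ / h := by
  have h2h : 0 < 2 * h := by positivity
  rw [centralDiff, centralDiff, ← sub_div, abs_div, abs_of_pos h2h, div_le_div_iff₀ h2h hh]
  have := abs_sub (g (x + h) - f (x + h)) (g (x - h) - f (x - h))
  calc |g (x + h) - g (x - h) - (f (x + h) - f (x - h))| * h
      = |g (x + h) - f (x + h) - (g (x - h) - f (x - h))| * h := by congr 2; ring
    _ ≤ (δ + δ) * h := by gcongr; linarith
    _ = δ * (2 * h) := by ring

lemma mul_rpow_sub_one_eq_of_eq_rpow_inv {M δ a h : ℝ} (ha : 1 < a) (hM : 0 < M) (hδ : 0 < δ)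
    (hh : h = (2 * δ / (M * (a - 1))) ^ (1 / a)) :
    M * h ^ (a - 1) = M ^ (1 / a) * (2 / (a - 1)) ^ ((a - 1) / a) * δ ^ ((a - 1) / a) := by
  have ha1 : 0 < a - 1 := by linarith
  have hM' : M = M ^ (1 / a) * M ^ ((a - 1) / a) := by
    rw [← Real.rpow_add hM, ← add_div, add_sub_cancel, div_self (by positivity), Real.rpow_one]
  rw [hh, ← Real.rpow_mul (by positivity), one_div_mul_eq_div,
    show 2 * δ / (M * (a - 1)) = 2 / (a - 1) * δ / M by field_simp,
    Real.div_rpow (by positivity) hM.le, Real.mul_rpow (by positivity) hδ.le]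
  nth_rw 1 [hM']
  field_simp

lemma div_eq_mul_rpow_sub_one_of_eq_rpow_inv {M δ a h : ℝ} (ha : 1 < a) (hM : 0 < M)
    (hδ : 0 < δ) (hh : h = (2 * δ / (M * (a - 1))) ^ (1 / a)) :
    δ / h = (a - 1) / 2 * (M * h ^ (a - 1)) := by
  have ha1 : 0 < a - 1 := by linarith
  have hpos : 0 < h := hh ▸ by positivity
  have hha : h ^ a = 2 * δ / (M * (a - 1)) := by
    rw [hh, ← Real.rpow_mul (by positivity), one_div_mul_cancel (by positivity), Real.rpow_one]
  rw [Real.rpow_sub_one hpos.ne', hha]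
  field_simp

theorem holder_stable_diff_error_general
    (a Ma δ x h : ℝ) (ha1 : 1 < a) (hMa : 0 < Ma) (hδ : 0 < δ)
    (hh : h = (2 * δ / (Ma * (a - 1))) ^ (1 / a))
    (f f' fδ : ℝ → ℝ)
    (hder : ∀ t ∈ Set.Icc (x - h) (x + h), HasDerivAt f (f' t) t)
    (hHolder : ∀ u ∈ Set.Icc (x - h) (x + h), ∀ v ∈ Set.Icc (x - h) (x + h),
      |f' u - f' v| ≤ Ma * |u - v| ^ (a - 1))
    (hnoise1 : |fδ (x + h) - f (x + h)| ≤ δ)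
    (hnoise2 : |fδ (x - h) - f (x - h)| ≤ δ) :
    |(fδ (x + h) - fδ (x - h)) / (2 * h) - f' x| ≤
      a * Ma ^ (1 / a) * (2 / (a - 1)) ^ ((a - 1) / a) * δ ^ ((a - 1) / a) := by
  have ha1' : 0 < a - 1 := by linarith
  have hpos : 0 < h := hh ▸ by positivity
  have hx : x ∈ Icc (x - h) (x + h) := ⟨by linarith, by linarith⟩
  have htrunc := abs_centralDiff_sub_le_of_holderAt hpos hMa.le ha1'.le hder
    fun t ht ↦ hHolder t ht x hx
  have hnoise := abs_centralDiff_sub_centralDiff_le hpos hnoise1 hnoise2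
  calc |centralDiff fδ x h - f' x|
      ≤ |centralDiff fδ x h - centralDiff f x h| + |centralDiff f x h - f' x| :=
        abs_sub_le _ _ _
    _ ≤ δ / h + Ma * h ^ (a - 1) := add_le_add hnoise htrunc
    _ = (a + 1) / 2 * (Ma * h ^ (a - 1)) := by
        rw [div_eq_mul_rpow_sub_one_of_eq_rpow_inv ha1 hMa hδ hh]; ring
    _ ≤ a * (Ma * h ^ (a - 1)) := by gcongr; linarith
    _ = a * Ma ^ (1 / a) * (2 / (a - 1)) ^ ((a - 1) / a) * δ ^ ((a - 1) / a) := by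
        rw [mul_rpow_sub_one_eq_of_eq_rpow_inv ha1 hMa hδ hh]; ring

/-- Hölder-class stable differentiation with noisy data.  With
`h = (2δ/(M_a(a-1)))^(1/a)` and `f'` `(a-1)`-Hölder with constant `M_a` on
`[x-h, x+h]`, the symmetric difference quotient of the noisy data estimates
`f'(x)` with error `≤ a·M_a^(1/a)·(2/(a-1))^((a-1)/a)·δ^((a-1)/a)`. -/
theorem holder_stable_diff_error
    (a Ma δ x h : ℝ) (ha1 : 1 < a) (ha2 : a ≤ 2) (hMa : 0 < Ma) (hδ : 0 < δ)
    (hh : h = (2 * δ / (Ma * (a - 1))) ^ (1 / a))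
    (f f' fδ : ℝ → ℝ)
    (hder : ∀ t ∈ Set.Icc (x - h) (x + h), HasDerivAt f (f' t) t)
    (hHolder : ∀ u ∈ Set.Icc (x - h) (x + h), ∀ v ∈ Set.Icc (x - h) (x + h),
      |f' u - f' v| ≤ Ma * |u - v| ^ (a - 1))
    (hnoise1 : |fδ (x + h) - f (x + h)| ≤ δ)
    (hnoise2 : |fδ (x - h) - f (x - h)| ≤ δ) :
    |(fδ (x + h) - fδ (x - h)) / (2 * h) - f' x| ≤
      a * Ma ^ (1 / a) * (2 / (a - 1)) ^ ((a - 1) / a) * δ ^ ((a - 1) / a) :=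
  holder_stable_diff_error_general a Ma δ x h ha1 hMa hδ hh f f' fδ hder hHolder hnoise1 hnoise2
end

section
/- Let δ > 0, M₂ > 0, set h = √(2δ/M₂) and ε(δ) = √(2M₂δ), and let x ∈ ℝ. Suppose f : ℝ → ℝ is twice differentiable on [x−h, x+2h] with |f''(t)| ≤ M₂ there, and suppose f_δ : ℝ → ℝ satisfies |f_δ(t) − f(t)| ≤ δ for t ∈ {x−h, x, x+h, x+2h}. Define f_j = (f_δ(x+h) − f_δ(x−h))/(2h) and f_{j+1} = (f_δ(x+2h) − f_δ(x))/(2h). Then |f_{j+1} − f_j| ≤ 2·ε(δ). Consequently, if |f_{j+1} − f_j| > 2·ε(δ) and |f_δ − f| ≤ δ on the four grid points, then f fails to be twice differentiable with |f''| ≤ M₂ throughout [x−h, x+2h]. -/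
/-!
Write `Δ = f(x+2h) - f(x+h) - f(x) + f(x-h)` as the increment over `[x-h, x]` of
`t ↦ f(t+2h) - f(t)`, whose derivative `f'(t+2h) - f'(t)` is at most `2M₂h` by the mean value
inequality for `f'`; hence `|Δ| ≤ 2M₂h²`. The noise adds at most `4δ`, so
`|f_{j+1} - f_j| ≤ M₂h + 2δ/h`, and `h = √(2δ/M₂)` is exactly the step balancing the two terms,
each of which then equals `ε(δ)`.
-/

open Set

theorem abs_sub_le_of_abs_deriv_le_on_Icc {g g' : ℝ → ℝ} {a b M : ℝ}
    (hg : ∀ t ∈ Icc a b, HasDerivAt g (g' t) t) (hg' : ∀ t ∈ Icc a b, |g' t| ≤ M)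
    {s t : ℝ} (hs : s ∈ Icc a b) (ht : t ∈ Icc a b) :
    |g t - g s| ≤ M * |t - s| :=
  (convex_Icc a b).norm_image_sub_le_of_norm_hasDerivWithin_le
    (fun r hr => (hg r hr).hasDerivWithinAt) hg' hs ht

theorem abs_second_difference_le {f f' f'' : ℝ → ℝ} {a b u v M : ℝ}
    (hu : 0 ≤ u) (hv : 0 ≤ v) (hb : b = a + u + v)
    (hf : ∀ t ∈ Icc a b, HasDerivAt f (f' t) t)
    (hf' : ∀ t ∈ Icc a b, HasDerivAt f' (f'' t) t)
    (hf'' : ∀ t ∈ Icc a b, |f'' t| ≤ M) :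
    |f b - f (a + v) - f (a + u) + f a| ≤ M * u * v := by
  subst hb
  have mem_left : ∀ t ∈ Icc a (a + u), t ∈ Icc a (a + u + v) :=
    fun t ⟨h₁, h₂⟩ => ⟨h₁, by linarith⟩
  have mem_right : ∀ t ∈ Icc a (a + u), t + v ∈ Icc a (a + u + v) :=
    fun t ⟨h₁, h₂⟩ => ⟨by linarith, by linarith⟩
  have hG : ∀ t ∈ Icc a (a + u),
      HasDerivAt (fun t => f (t + v) - f t) (f' (t + v) - f' t) t := fun t ht =>
    ((hf _ (mem_right t ht)).comp_add_const t v).sub (hf t (mem_left t ht))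
  have hG' : ∀ t ∈ Icc a (a + u), |f' (t + v) - f' t| ≤ M * v := fun t ht => by
    simpa [abs_of_nonneg hv] using
      abs_sub_le_of_abs_deriv_le_on_Icc hf' hf'' (mem_left t ht) (mem_right t ht)
  have key := abs_sub_le_of_abs_deriv_le_on_Icc hG hG'
    (left_mem_Icc.mpr (by linarith)) (right_mem_Icc.mpr (by linarith))
  simp only [add_sub_cancel_left, abs_of_nonneg hu] at key
  calc |f (a + u + v) - f (a + v) - f (a + u) + f a|
      = |f (a + u + v) - f (a + u) - (f (a + v) - f a)| := by ring_nf
    _ ≤ M * v * u := key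
    _ = M * u * v := by ring

theorem mul_sq_sqrt_div_eq {c M : ℝ} (hc : 0 ≤ c) (hM : 0 < M) :
    M * √(c / M) ^ 2 = c := by
  rw [Real.sq_sqrt (by positivity)]
  field_simp

theorem sqrt_mul_mul_sqrt_div_eq {δ M : ℝ} (hδ : 0 ≤ δ) (hM : 0 < M) :
    √(2 * M * δ) * √(2 * δ / M) = 2 * δ := by
  rw [← Real.sqrt_mul (by positivity), show 2 * M * δ * (2 * δ / M) = (2 * δ) * (2 * δ) by
    field_simp]
  exact Real.sqrt_mul_self (by positivity)

/-- smoothness test via consecutive difference quotients.  With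
`h = √(2δ/M₂)`, `ε(δ) = √(2M₂δ)`, noisy data `f_δ` on the four grid points and
`f_j = (f_δ(x+h) - f_δ(x-h))/(2h)`, `f_{j+1} = (f_δ(x+2h) - f_δ(x))/(2h)`:
if `f` is twice differentiable on `[x-h, x+2h]` with `|f''| ≤ M₂` there, then
`|f_{j+1} - f_j| ≤ 2ε(δ)`; consequently, if `|f_{j+1} - f_j| > 2ε(δ)` then `f`
fails to be twice differentiable with `|f''| ≤ M₂` throughout `[x-h, x+2h]`. -/
theorem smoothness_test_second_difference
    (δ M₂ h ε x : ℝ) (hδ : 0 < δ) (hM₂ : 0 < M₂)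
    (hh : h = Real.sqrt (2 * δ / M₂)) (hε : ε = Real.sqrt (2 * M₂ * δ))
    (f fδ : ℝ → ℝ)
    (hnoise : ∀ t ∈ ({x - h, x, x + h, x + 2 * h} : Set ℝ), |fδ t - f t| ≤ δ) :
    ((∃ f' f'' : ℝ → ℝ, ∀ t ∈ Set.Icc (x - h) (x + 2 * h),
        HasDerivAt f (f' t) t ∧ HasDerivAt f' (f'' t) t ∧ |f'' t| ≤ M₂) →
      |(fδ (x + 2 * h) - fδ x) / (2 * h) -
        (fδ (x + h) - fδ (x - h)) / (2 * h)| ≤ 2 * ε) ∧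
    (2 * ε < |(fδ (x + 2 * h) - fδ x) / (2 * h) -
        (fδ (x + h) - fδ (x - h)) / (2 * h)| →
      ¬ ∃ f' f'' : ℝ → ℝ, ∀ t ∈ Set.Icc (x - h) (x + 2 * h),
        HasDerivAt f (f' t) t ∧ HasDerivAt f' (f'' t) t ∧ |f'' t| ≤ M₂) := by
  have hh_pos : 0 < h := hh ▸ Real.sqrt_pos.mpr (by positivity)
  have hMh : M₂ * h ^ 2 = 2 * δ := hh ▸ mul_sq_sqrt_div_eq (by positivity) hM₂
  have hεh : ε * h = 2 * δ := hh ▸ hε ▸ sqrt_mul_mul_sqrt_div_eq hδ.le hM₂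
  have bound : (∃ f' f'' : ℝ → ℝ, ∀ t ∈ Set.Icc (x - h) (x + 2 * h),
        HasDerivAt f (f' t) t ∧ HasDerivAt f' (f'' t) t ∧ |f'' t| ≤ M₂) →
      |(fδ (x + 2 * h) - fδ x) / (2 * h) -
        (fδ (x + h) - fδ (x - h)) / (2 * h)| ≤ 2 * ε := by
    rintro ⟨f', f'', hf⟩
    have hΔ := abs_second_difference_le (u := h) (v := 2 * h) hh_pos.le (by positivity)
      (by ring) (fun t ht => (hf t ht).1) (fun t ht => (hf t ht).2.1) (fun t ht => (hf t ht).2.2)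
    rw [show x - h + 2 * h = x + h by ring, sub_add_cancel,
      show M₂ * h * (2 * h) = 4 * δ by linear_combination 2 * hMh] at hΔ
    have n₁ := abs_le.mp (hnoise (x - h) (by simp))
    have n₂ := abs_le.mp (hnoise x (by simp))
    have n₃ := abs_le.mp (hnoise (x + h) (by simp))
    have n₄ := abs_le.mp (hnoise (x + 2 * h) (by simp))
    have hΔ' := abs_le.mp hΔ
    have h2h : 0 < 2 * h := by positivity
    rw [div_sub_div_same, abs_div, abs_of_pos h2h, div_le_iff₀ h2h,
      show 2 * ε * (2 * h) = 8 * δ by linear_combination 4 * hεh, abs_le]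
    constructor <;> linarith
  exact ⟨bound, fun hgt hsmooth => (bound hsmooth).not_gt hgt⟩
end
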